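/- arXiv:1605.06373 — 2 statements merged into one kernel-verified Lean document; each statement's English description precedes it below -/
import Mathlib

section
/- (Angular estimate, two-dimensional case) Let n > 2 and ν > n be real numbers, let m := 1 − 1/ν, let α > 0, and let P : ℝ → (0,∞) be a C³ function which is 2π-periodic. Define k[P](θ) := ((n-2)/(n-1)) |P''(θ)|² − (n-2) α² |P'(θ)|² and c := ((n-2)/(n-1)) · m(4−3m)/(12(1−m)²) = ((n-2)/(n-1)) · (ν-1)(ν+3)/12. Then ∫₀^{2π} k[P] P^{1-ν} dθ ≥ (n-2)(1/(n-1) − α²) ∫₀^{2π} |P'|² P^{1-ν} dθ + c ∫₀^{2π} (|P'|⁴ / P²) P^{1-ν} dθ. -/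
/-!
Put `g = P' P^((1-ν)/2)`. It is the derivative of `Φ ∘ P` for a primitive `Φ` of `u ↦ u^((1-ν)/2)`,
so it has mean zero over a period, and Wirtinger's inequality (Parseval plus `ĝ'(k) = i k ĝ(k)`)
gives `∫ g² ≤ ∫ g'²`, where `g' = (P'' + (1-ν)/2 · P'²/P) P^((1-ν)/2)`. In `∫ g'²` the cross term
`P'' P'² P^(-ν)` is `(ν/3) P'⁴ P^(-1-ν)` up to the derivative of `P'³ P^(-ν) / 3`, whence
`∫ P'² P^(1-ν) + (ν-1)(ν+3)/12 ∫ P'⁴ P^(-1-ν) ≤ ∫ P''² P^(1-ν)`.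
Multiplying by `(n-2)/(n-1) ≥ 0` gives the estimate, as `m(4-3m)/(12(1-m)²) = (ν-1)(ν+3)/12`.
-/

open Real intervalIntegral

noncomputable section

/-- `k[P](θ) = ((n-2)/(n-1)) |P''(θ)|² − (n-2) α² |P'(θ)|²`. -/
def kP (n α : ℝ) (P : ℝ → ℝ) (θ : ℝ) : ℝ :=
  ((n-2)/(n-1)) * |deriv (deriv P) θ|^2 - (n-2) * α^2 * |deriv P θ|^2

open MeasureTheory Set

lemma ContinuousOn.memLp_two_restrict_Ioc {a b : ℝ} {f : ℝ → ℂ}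
    (hf : ContinuousOn f (Icc a b)) :
    MemLp f 2 (volume.restrict (Ioc a b)) :=
  (memLp_two_iff_integrable_sq_norm
    ((hf.mono Ioc_subset_Icc_self).aestronglyMeasurable measurableSet_Ioc)).2
    (((hf.norm.pow 2).integrableOn_Icc).mono_set Ioc_subset_Icc_self)

lemma norm_fourierCoeffOn_le_of_integral_eq_zero {a b : ℝ} (hab : a < b) {f f' : ℝ → ℂ}
    (hf : ∀ x ∈ Icc a b, HasDerivAt f (f' x) x) (hf' : ContinuousOn f' (Icc a b))
    (hfab : f a = f b) (hmean : ∫ x in a..b, f x = 0) (n : ℤ) :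
    ‖fourierCoeffOn hab f n‖ ≤ (b - a) / (2 * π) * ‖fourierCoeffOn hab f' n‖ := by
  rcases eq_or_ne n 0 with rfl | hn
  · rw [fourierCoeffOn_eq_integral]
    simp only [neg_zero, fourier_zero, one_smul, hmean, smul_zero, norm_zero]
    positivity
  · rw [fourierCoeffOn_of_hasDerivAt hab hn (by rwa [uIcc_of_le hab.le])
      (by rw [intervalIntegrable_iff_integrableOn_Icc_of_le hab.le]; exact hf'.integrableOn_Icc),
      hfab, sub_self, mul_zero, zero_sub]
    have hn1 : (1 : ℝ) ≤ |(n : ℝ)| := by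
      rw [← Int.cast_abs]; exact_mod_cast Int.one_le_abs hn
    rw [← Complex.ofReal_sub]
    simp only [norm_mul, norm_neg, norm_div, norm_one, Complex.norm_real, Complex.norm_I,
      Complex.norm_intCast, Complex.norm_ofNat, Real.norm_eq_abs, abs_of_pos (sub_pos.2 hab),
      abs_of_pos pi_pos]
    calc _ = (b - a) / (2 * π) * ‖fourierCoeffOn hab f' n‖ / |(n : ℝ)| := by ring
      _ ≤ _ := div_le_self (by positivity) hn1

theorem integral_norm_sq_le_of_integral_eq_zero {a b : ℝ} (hab : a < b) {f f' : ℝ → ℂ}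
    (hf : ∀ x ∈ Icc a b, HasDerivAt f (f' x) x) (hf' : ContinuousOn f' (Icc a b))
    (hfab : f a = f b) (hmean : ∫ x in a..b, f x = 0) :
    ∫ x in a..b, ‖f x‖ ^ 2 ≤ ((b - a) / (2 * π)) ^ 2 * ∫ x in a..b, ‖f' x‖ ^ 2 := by
  have hcont : ContinuousOn f (Icc a b) := fun x hx => (hf x hx).continuousAt.continuousWithinAt
  have key := hasSum_le (fun n => pow_le_pow_left₀ (norm_nonneg _)
      (norm_fourierCoeffOn_le_of_integral_eq_zero hab hf hf' hfab hmean n) 2)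
    (hasSum_sq_fourierCoeffOn hab hcont.memLp_two_restrict_Ioc)
    (((hasSum_sq_fourierCoeffOn hab hf'.memLp_two_restrict_Ioc).mul_left
      (((b - a) / (2 * π)) ^ 2)).congr_fun ?_)
  · rw [smul_eq_mul, smul_eq_mul, mul_left_comm] at key
    exact le_of_mul_le_mul_left key (inv_pos.2 (sub_pos.2 hab))
  · intro n; simp only [mul_pow]

theorem integral_sq_le_of_integral_eq_zero {a b : ℝ} (hab : a < b) {g g' : ℝ → ℝ}
    (hg : ∀ x ∈ Icc a b, HasDerivAt g (g' x) x) (hg' : ContinuousOn g' (Icc a b))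
    (hgab : g a = g b) (hmean : ∫ x in a..b, g x = 0) :
    ∫ x in a..b, g x ^ 2 ≤ ((b - a) / (2 * π)) ^ 2 * ∫ x in a..b, g' x ^ 2 := by
  have h := integral_norm_sq_le_of_integral_eq_zero hab (fun x hx => (hg x hx).ofReal_comp)
    (Complex.continuous_ofReal.comp_continuousOn hg') (by rw [hgab])
    (by rw [integral_ofReal, hmean, Complex.ofReal_zero])
  simpa only [Complex.norm_real, norm_eq_abs, sq_abs] using h

lemma Function.Periodic.deriv {f : ℝ → ℝ} {c : ℝ} (hf : Function.Periodic f c) :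
    Function.Periodic (deriv f) c := fun x => by
  rw [← deriv_comp_add_const, hf.funext]

lemma HasDerivAt.rpow_const_of_pos {f : ℝ → ℝ} {f' x : ℝ} (hf : HasDerivAt f f' x)
    (hx : 0 < f x) (e : ℝ) : HasDerivAt (fun y => f y ^ e) (e * f' / f x * f x ^ e) x :=
  (hf.rpow_const (Or.inl hx.ne')).congr_deriv (by rw [rpow_sub_one hx.ne']; ring)

lemma Continuous.intervalIntegrable_mul_rpow {f P : ℝ → ℝ} (hf : Continuous f)
    (hP : Continuous P) (hpos : ∀ θ, 0 < P θ) (e a b : ℝ) :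
    IntervalIntegrable (fun θ => f θ * P θ ^ e) volume a b :=
  (hf.mul (hP.rpow_const fun θ => Or.inl (hpos θ).ne')).intervalIntegrable a b

lemma rpow_div_two_sq {x : ℝ} (hx : 0 ≤ x) (e : ℝ) : (x ^ (e / 2)) ^ 2 = x ^ e := by
  rw [← rpow_natCast, ← rpow_mul hx]; norm_num

lemma hasDerivAt_deriv_mul_rpow {P : ℝ → ℝ} (hP : ContDiff ℝ 2 P) (hpos : ∀ θ, 0 < P θ)
    (e θ : ℝ) :
    HasDerivAt (fun θ => deriv P θ * P θ ^ e)
      ((deriv (deriv P) θ + e * deriv P θ ^ 2 / P θ) * P θ ^ e) θ :=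
  ((hP.differentiable_deriv_two θ).hasDerivAt.mul
    ((hP.differentiable (by norm_num) θ).hasDerivAt.rpow_const_of_pos (hpos θ) e)).congr_deriv
    (by field_simp)

lemma integral_deriv_mul_rpow_eq_zero {P : ℝ → ℝ} (hP : ContDiff ℝ 1 P)
    (hpos : ∀ θ, 0 < P θ) (e : ℝ) {a b : ℝ} (hPab : P a = P b) :
    ∫ θ in a..b, deriv P θ * P θ ^ e = 0 := by
  have h := integral_comp_mul_deriv' (a := a) (b := b) (g := fun u => u ^ e)
    (fun θ _ => (hP.differentiable one_ne_zero θ).hasDerivAt)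
    (hP.continuous_deriv le_rfl).continuousOn
    (by
      rintro _ ⟨θ, -, rfl⟩
      exact (continuousAt_rpow_const _ _ (Or.inl (hpos θ).ne')).continuousWithinAt)
  rw [hPab, integral_same] at h
  simpa only [Function.comp_apply, mul_comm] using h

theorem integral_sq_deriv_deriv_add_mul_rpow {P : ℝ → ℝ} (ν : ℝ) (hP : ContDiff ℝ 2 P)
    (hpos : ∀ θ, 0 < P θ) {a b : ℝ} (hPab : P a = P b) (hP'ab : deriv P a = deriv P b) :
    ∫ θ in a..b, (deriv (deriv P) θ + (1 - ν) / 2 * deriv P θ ^ 2 / P θ) ^ 2 * P θ ^ (1 - ν) =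
      (∫ θ in a..b, deriv (deriv P) θ ^ 2 * P θ ^ (1 - ν))
        - (ν - 1) * (ν + 3) / 12 * ∫ θ in a..b, deriv P θ ^ 4 / P θ ^ 2 * P θ ^ (1 - ν) := by
  have hP1 : ∀ θ, HasDerivAt P (deriv P θ) θ := fun θ =>
    (hP.differentiable (by norm_num) θ).hasDerivAt
  have cP : Continuous P := hP.continuous
  have cP' : Continuous (deriv P) := hP.continuous_deriv (by norm_num)
  have cP'' : Continuous (deriv (deriv P)) := (hP.deriv' (n := 1)).continuous_deriv le_rfl
  set κ := (ν - 1) * (ν + 3) / 12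
  have hQ : ∀ θ, HasDerivAt (fun θ => (1 - ν) / 3 * (deriv P θ ^ 3 / P θ * P θ ^ (1 - ν)))
      ((deriv (deriv P) θ + (1 - ν) / 2 * deriv P θ ^ 2 / P θ) ^ 2 * P θ ^ (1 - ν)
        - (deriv (deriv P) θ ^ 2 * P θ ^ (1 - ν)
          - κ * (deriv P θ ^ 4 / P θ ^ 2 * P θ ^ (1 - ν)))) θ := fun θ =>
    (((((hP.differentiable_deriv_two θ).hasDerivAt.fun_pow 3).div (hP1 θ) (hpos θ).ne').mul
        ((hP1 θ).rpow_const_of_pos (hpos θ) _)).const_mul _).congr_deriv (by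
        simp only [κ, Pi.div_apply]
        have := (hpos θ).ne'
        field_simp
        ring)
  have iA : IntervalIntegrable (fun θ =>
      (deriv (deriv P) θ + (1 - ν) / 2 * deriv P θ ^ 2 / P θ) ^ 2 * P θ ^ (1 - ν)) volume a b :=
    ((cP''.add ((continuous_const.mul (cP'.pow 2)).div cP fun θ => (hpos θ).ne')).pow 2
      ).intervalIntegrable_mul_rpow cP hpos _ _ _
  have iB : IntervalIntegrable (fun θ => deriv P θ ^ 4 / P θ ^ 2 * P θ ^ (1 - ν)) volume a b :=
    ((cP'.pow 4).div (cP.pow 2) fun θ => pow_ne_zero _ (hpos θ).ne').intervalIntegrable_mul_rpow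
      cP hpos _ _ _
  have iJ : IntervalIntegrable (fun θ => deriv (deriv P) θ ^ 2 * P θ ^ (1 - ν)) volume a b :=
    (cP''.pow 2).intervalIntegrable_mul_rpow cP hpos _ _ _
  have hboundary := integral_eq_sub_of_hasDerivAt (fun θ _ => hQ θ)
    (iA.sub (iJ.sub (iB.const_mul κ)))
  rw [integral_sub iA (iJ.sub (iB.const_mul κ)), integral_sub iJ (iB.const_mul κ),
    intervalIntegral.integral_const_mul, hPab, hP'ab, sub_self] at hboundary
  linarith

theorem integral_sq_deriv_mul_rpow_le {P : ℝ → ℝ} (ν : ℝ) (hP : ContDiff ℝ 2 P)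
    (hpos : ∀ θ, 0 < P θ) (hper : Function.Periodic P (2 * π)) :
    (∫ θ in 0..2 * π, deriv P θ ^ 2 * P θ ^ (1 - ν))
      + (ν - 1) * (ν + 3) / 12 * ∫ θ in 0..2 * π, deriv P θ ^ 4 / P θ ^ 2 * P θ ^ (1 - ν)
    ≤ ∫ θ in 0..2 * π, deriv (deriv P) θ ^ 2 * P θ ^ (1 - ν) := by
  have hP0 : P (2 * π) = P 0 := by simpa using hper 0
  have hP'0 : deriv P (2 * π) = deriv P 0 := by simpa using hper.deriv 0
  have cP : Continuous P := hP.continuous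
  have cg' : Continuous fun θ =>
      (deriv (deriv P) θ + (1 - ν) / 2 * deriv P θ ^ 2 / P θ) * P θ ^ ((1 - ν) / 2) :=
    (((hP.deriv' (n := 1)).continuous_deriv le_rfl).add
      ((continuous_const.mul ((hP.continuous_deriv (by norm_num)).pow 2)).div cP
        fun θ => (hpos θ).ne')).mul (cP.rpow_const fun θ => Or.inl (hpos θ).ne')
  have hwirt := integral_sq_le_of_integral_eq_zero two_pi_pos
    (fun θ _ => hasDerivAt_deriv_mul_rpow hP hpos ((1 - ν) / 2) θ) cg'.continuousOn
    (by rw [hP0, hP'0]) (integral_deriv_mul_rpow_eq_zero (hP.of_le (by norm_num)) hpos _ hP0.symm)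
  simp only [sub_zero, div_self two_pi_pos.ne', one_pow, one_mul, mul_pow,
    rpow_div_two_sq (hpos _).le] at hwirt
  rw [integral_sq_deriv_deriv_add_mul_rpow ν hP hpos hP0.symm hP'0.symm] at hwirt
  linarith

lemma integral_kP_mul_rpow (n α : ℝ) {P : ℝ → ℝ} (hP : ContDiff ℝ 2 P) (hpos : ∀ θ, 0 < P θ)
    (e a b : ℝ) :
    ∫ θ in a..b, kP n α P θ * P θ ^ e =
      (n - 2) / (n - 1) * (∫ θ in a..b, deriv (deriv P) θ ^ 2 * P θ ^ e)
        - (n - 2) * α ^ 2 * ∫ θ in a..b, deriv P θ ^ 2 * P θ ^ e := by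
  have cP := hP.continuous
  have iA : IntervalIntegrable (fun θ => deriv P θ ^ 2 * P θ ^ e) volume a b :=
    ((hP.continuous_deriv (by norm_num)).pow 2).intervalIntegrable_mul_rpow cP hpos _ _ _
  have iJ : IntervalIntegrable (fun θ => deriv (deriv P) θ ^ 2 * P θ ^ e) volume a b :=
    (((hP.deriv' (n := 1)).continuous_deriv le_rfl).pow 2).intervalIntegrable_mul_rpow
      cP hpos _ _ _
  have hexpand : (fun θ => kP n α P θ * P θ ^ e) = fun θ =>
      (n - 2) / (n - 1) * (deriv (deriv P) θ ^ 2 * P θ ^ e)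
        - (n - 2) * α ^ 2 * (deriv P θ ^ 2 * P θ ^ e) := by
    funext θ; simp only [kP, sq_abs]; ring
  rw [hexpand, integral_sub (iJ.const_mul _) (iA.const_mul _),
    intervalIntegral.integral_const_mul, intervalIntegral.integral_const_mul]

theorem angular_estimate_dim2_general
    (n ν m α : ℝ) (hn : 2 < n) (hν : n < ν) (hm : m = 1 - 1/ν)
    (c : ℝ) (hc : c = ((n-2)/(n-1)) * (m*(4-3*m)/(12*(1-m)^2)))
    (P : ℝ → ℝ) (hP : ContDiff ℝ 3 P)
    (hpos : ∀ θ : ℝ, 0 < P θ)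
    (hper : ∀ θ : ℝ, P (θ + 2*π) = P θ) :
    (n-2) * (1/(n-1) - α^2) *
        (∫ θ in (0:ℝ)..(2*π), |deriv P θ|^2 * P θ ^ (1 - ν))
      + c * ∫ θ in (0:ℝ)..(2*π), (|deriv P θ|^4 / P θ^2) * P θ ^ (1 - ν)
    ≤ ∫ θ in (0:ℝ)..(2*π), kP n α P θ * P θ ^ (1 - ν) := by
  have hP2 : ContDiff ℝ 2 P := hP.of_le (by norm_num)
  have hc' : c = (n - 2) / (n - 1) * ((ν - 1) * (ν + 3) / 12) := by
    have : ν ≠ 0 := by linarith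
    rw [hc, hm]; field_simp; ring
  have key := integral_sq_deriv_mul_rpow_le ν hP2 hpos hper
  have habs4 : ∀ x : ℝ, |x| ^ 4 = x ^ 4 := fun x => (by norm_num : Even 4).pow_abs x
  simp only [sq_abs, habs4, integral_kP_mul_rpow n α hP2 hpos, hc']
  have hq : 0 ≤ (n - 2) / (n - 1) := div_nonneg (by linarith) (by linarith)
  linear_combination mul_le_mul_of_nonneg_left key hq

/-- The angular estimate in the two-dimensional case: with
`m = 1 − 1/ν` and `c = ((n-2)/(n-1))·(ν-1)(ν+3)/12`,
`∫ k[P] P^{1-ν} ≥ (n-2)(1/(n-1) − α²) ∫ |P'|² P^{1-ν} + c ∫ (|P'|⁴/P²) P^{1-ν}`. -/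
theorem angular_estimate_dim2
    (n ν m α : ℝ) (hn : 2 < n) (hν : n < ν) (hm : m = 1 - 1/ν) (hα : 0 < α)
    (c : ℝ) (hc : c = ((n-2)/(n-1)) * (m*(4-3*m)/(12*(1-m)^2)))
    (P : ℝ → ℝ) (hP : ContDiff ℝ 3 P)
    (hpos : ∀ θ : ℝ, 0 < P θ)
    (hper : ∀ θ : ℝ, P (θ + 2*π) = P θ) :
    (n-2) * (1/(n-1) - α^2) *
        (∫ θ in (0:ℝ)..(2*π), |deriv P θ|^2 * P θ ^ (1 - ν))
      + c * ∫ θ in (0:ℝ)..(2*π), (|deriv P θ|^4 / P θ^2) * P θ ^ (1 - ν)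
    ≤ ∫ θ in (0:ℝ)..(2*π), kP n α P θ * P θ ^ (1 - ν) :=
  angular_estimate_dim2_general n ν m α hn hν hm c hc P hP hpos hper
end
end

section
/- (Power-type supersolution) Let d ≥ 2 and let β, γ, p satisfy γ < d, γ − 2 < β < (d-2)γ/d, and p ∈ (1, p⋆] with p⋆ = (d-γ)/(d-β-2). Let ε ∈ [0,1) and C > 0, and define h(x) := C |x|^{(γ-2-β)/(p-1)}. If C^{p-1} ≥ (2-γ+β)(d-γ-p(d-2-β)) / ((1-ε)(p-1)²), then h satisfies the pointwise differential inequality −div(|x|^{-β} ∇h)(x) + (1-ε) |x|^{-γ} h(x)^p ≥ 0 for every x ∈ ℝ^d \ {0}. -/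
open MeasureTheory Real Filter Set
open scoped RealInnerProductSpace

noncomputable section

/-- Euclidean space `ℝ^d`. -/
abbrev Esp (d : ℕ) := EuclideanSpace ℝ (Fin d)

/-- Weighted norm `‖w‖_{q,γ} = (∫ |w|^q |x|^{-γ} dx)^{1/q}`. -/
def wnorm (d : ℕ) (q γ : ℝ) (w : Esp d → ℝ) : ℝ :=
  (∫ x : Esp d, |w x| ^ q * ‖x‖ ^ (-γ)) ^ (1/q)

/-- Weighted gradient norm `‖∇w‖_{2,β} = (∫ |∇w|² |x|^{-β} dx)^{1/2}`. -/
def gnorm (d : ℕ) (β : ℝ) (w : Esp d → ℝ) : ℝ :=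
  (∫ x : Esp d, ‖gradient w x‖ ^ (2:ℝ) * ‖x‖ ^ (-β)) ^ ((1:ℝ)/2)

/-- The interpolation exponent θ. -/
def thetaExp (d : ℕ) (β γ p : ℝ) : ℝ :=
  ((d:ℝ) - γ) * (p - 1) / (p * ((d:ℝ) + β + 2 - 2*γ - p*((d:ℝ) - β - 2)))

/-- The Aubin–Talenti type function `w⋆(x) = (1+|x|^{2+β-γ})^{-1/(p-1)}`. -/
def wstar (d : ℕ) (β γ p : ℝ) : Esp d → ℝ :=
  fun x => (1 + ‖x‖ ^ (2 + β - γ)) ^ (-(1/(p-1)))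

/-- The Felli–Schneider curve `β_FS(γ)`. -/
def betaFS (d : ℕ) (γ : ℝ) : ℝ :=
  (d:ℝ) - 2 - Real.sqrt ((γ - (d:ℝ))^2 - 4*((d:ℝ)-1))

/-- The value of the CKN quotient at `w⋆`. -/
def Cstar (d : ℕ) (β γ p : ℝ) : ℝ :=
  wnorm d (2*p) γ (wstar d β γ p) /
    (gnorm d β (wstar d β γ p) ^ thetaExp d β γ p *
      wnorm d (p+1) γ (wstar d β γ p) ^ (1 - thetaExp d β γ p))

/-- Divergence of a vector field on `ℝ^d`. -/
def diverg (d : ℕ) (F : Esp d → Esp d) (x : Esp d) : ℝ :=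
  ∑ i, fderiv ℝ F x (EuclideanSpace.single i 1) i

/-! For `h = C r^α` with `r = ‖x‖`, the weighted flux `r^{-β} ∇h = Cα r^s x`, `s = α - β - 2`, is a
radial field of divergence `Cα (d + s) r^s`. The exponent `α = (γ - 2 - β)/(p - 1)` is chosen so
that the absorption term `(1 - ε) r^{-γ} h^p = (1 - ε) C^p r^s` is the same power of `r`; the
inequality thus reduces to `α (d + s) ≤ (1 - ε) C^{p-1}`, which is the hypothesis on `C` multiplied
by `(p - 1)^2`. -/

section NormRpow

variable {E : Type*} [NormedAddCommGroup E] [InnerProductSpace ℝ E]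

theorem hasFDerivAt_norm_rpow_of_ne_zero (α : ℝ) {x : E} (hx : x ≠ 0) :
    HasFDerivAt (fun y : E ↦ ‖y‖ ^ α) ((α * ‖x‖ ^ (α - 2)) • innerSL ℝ x) x := by
  convert! (hasStrictFDerivAt_norm_sq x).hasFDerivAt.rpow_const (p := α / 2) (by simp [hx])
    using 0
  simp_rw [← Real.rpow_natCast_mul (norm_nonneg _), ← Nat.cast_smul_eq_nsmul ℝ, smul_smul]
  ring_nf

theorem hasGradientAt_const_mul_norm_rpow [CompleteSpace E] (C α : ℝ) {x : E} (hx : x ≠ 0) :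
    HasGradientAt (fun y : E ↦ C * ‖y‖ ^ α) ((C * α * ‖x‖ ^ (α - 2)) • x) x := by
  rw [hasGradientAt_iff_hasFDerivAt]
  refine ((hasFDerivAt_norm_rpow_of_ne_zero α hx).const_mul C).congr_fderiv ?_
  ext v
  simp only [smul_apply, coe_innerSL_apply, smul_eq_mul, map_smul,
    InnerProductSpace.toDual_apply_apply]
  ring

end NormRpow

theorem Filter.EventuallyEq.diverg_eq {d : ℕ} {F G : Esp d → Esp d} {x : Esp d}
    (h : F =ᶠ[nhds x] G) : diverg d F x = diverg d G x := by
  simp only [diverg, h.fderiv_eq]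

theorem diverg_smul_id {d : ℕ} {f : Esp d → ℝ} {f' : Esp d →L[ℝ] ℝ} {x : Esp d}
    (hf : HasFDerivAt f f' x) : diverg d (fun y ↦ f y • y) x = f' x + d * f x := by
  have h : HasFDerivAt (fun y ↦ f y • y) _ x := hf.smul (hasFDerivAt_id x)
  rw [diverg, h.fderiv]
  have hf'x : f' x = ∑ i, f' (EuclideanSpace.single i 1) * x i := by
    conv_lhs => rw [← (EuclideanSpace.basisFun (Fin d) ℝ).sum_repr x]
    simp [mul_comm]
  simp only [add_apply, smul_apply, ContinuousLinearMap.id_apply,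
    ContinuousLinearMap.smulRight_apply, PiLp.add_apply, PiLp.smul_apply, PiLp.single_eq_same,
    smul_eq_mul, mul_one, Finset.sum_add_distrib, hf'x]
  rw [Finset.sum_const, Finset.card_univ, Fintype.card_fin, nsmul_eq_mul]
  ring

theorem diverg_const_mul_norm_rpow_smul {d : ℕ} (k s : ℝ) {x : Esp d} (hx : x ≠ 0) :
    diverg d (fun y ↦ (k * ‖y‖ ^ s) • y) x = k * (d + s) * ‖x‖ ^ s := by
  rw [diverg_smul_id ((hasFDerivAt_norm_rpow_of_ne_zero s hx).const_mul k)]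
  have hs : ‖x‖ ^ (s - 2) * ‖x‖ ^ (2 : ℕ) = ‖x‖ ^ s := by
    rw [← Real.rpow_natCast, ← Real.rpow_add (norm_pos_iff.mpr hx)]
    norm_num
  simp only [smul_apply, coe_innerSL_apply, real_inner_self_eq_norm_sq, smul_eq_mul]
  linear_combination k * s * hs

theorem diverg_weighted_gradient_norm_rpow {d : ℕ} (β C α : ℝ) {x : Esp d} (hx : x ≠ 0) :
    diverg d (fun y ↦ ‖y‖ ^ (-β) • gradient (fun z ↦ C * ‖z‖ ^ α) y) x
      = C * α * (d + (α - β - 2)) * ‖x‖ ^ (α - β - 2) := by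
  rw [← diverg_const_mul_norm_rpow_smul (C * α) (α - β - 2) hx]
  apply Filter.EventuallyEq.diverg_eq
  filter_upwards [isOpen_ne.mem_nhds hx] with y hy
  rw [(hasGradientAt_const_mul_norm_rpow C α hy).gradient, smul_smul, mul_left_comm,
    ← Real.rpow_add (norm_pos_iff.mpr hy)]
  ring_nf

theorem power_supersolution_general
    (d : ℕ) (β γ p : ℝ)
    (hp1 : 1 < p)
    (ε C : ℝ) (hε1 : ε < 1) (hC : 0 < C)
    (hCbig : (2 - γ + β) * ((d:ℝ) - γ - p*((d:ℝ) - 2 - β)) / ((1-ε)*(p-1)^2)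
      ≤ C ^ (p-1)) :
    ∀ x : Esp d, x ≠ 0 →
      0 ≤ - diverg d
            (fun y => ‖y‖ ^ (-β) • gradient (fun z => C * ‖z‖ ^ ((γ-2-β)/(p-1))) y) x
          + (1-ε) * ‖x‖ ^ (-γ) * (C * ‖x‖ ^ ((γ-2-β)/(p-1))) ^ p := by
  intro x hx
  have hα : (γ - 2 - β) / (p - 1) * (p - 1) = γ - 2 - β := div_mul_cancel₀ _ (by linarith)
  generalize (γ - 2 - β) / (p - 1) = α at hα ⊢
  have hr : 0 < ‖x‖ := norm_pos_iff.mpr hx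
  have hzeroth : ‖x‖ ^ (-γ) * (C * ‖x‖ ^ α) ^ p = C ^ (p - 1) * C * ‖x‖ ^ (α - β - 2) := by
    rw [Real.mul_rpow hC.le (by positivity), ← Real.rpow_mul hr.le, Real.rpow_sub_one hC.ne',
      div_mul_cancel₀ _ hC.ne', mul_left_comm, ← Real.rpow_add hr]
    congr 2
    linear_combination hα
  have hcoeff : α * (d + (α - β - 2)) ≤ (1 - ε) * C ^ (p - 1) := by
    have hp : 0 < (p - 1) ^ 2 := pow_pos (sub_pos.mpr hp1) 2
    rw [div_le_iff₀ (mul_pos (sub_pos.mpr hε1) hp)] at hCbig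
    refine le_of_mul_le_mul_right ?_ hp
    -- `α (d + α - β - 2) (p - 1)^2` is the numerator of `hCbig` once `α (p - 1) = γ - 2 - β`
    linear_combination hCbig + ((p - 1) * (d - β - 2) + α * (p - 1) + γ - 2 - β) * hα
  rw [diverg_weighted_gradient_norm_rpow β C α hx, mul_assoc (1 - ε), hzeroth]
  have := mul_le_mul_of_nonneg_left hcoeff (by positivity : 0 ≤ C * ‖x‖ ^ (α - β - 2))
  linarith

/-- Power-type supersolution: if
`C^{p-1} ≥ (2-γ+β)(d-γ-p(d-2-β))/((1-ε)(p-1)²)` then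
`h(x) = C|x|^{(γ-2-β)/(p-1)}` satisfies
`−div(|x|^{-β}∇h) + (1-ε)|x|^{-γ} h^p ≥ 0` on `ℝ^d \ {0}`. -/
theorem power_supersolution
    (d : ℕ) (hd : 2 ≤ d) (β γ p : ℝ)
    (hγd : γ < (d:ℝ)) (hβl : γ - 2 < β) (hβu : β < ((d:ℝ) - 2) * γ / (d:ℝ))
    (hp1 : 1 < p) (hp2 : p ≤ ((d:ℝ) - γ) / ((d:ℝ) - β - 2))
    (ε C : ℝ) (hε0 : 0 ≤ ε) (hε1 : ε < 1) (hC : 0 < C)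
    (hCbig : (2 - γ + β) * ((d:ℝ) - γ - p*((d:ℝ) - 2 - β)) / ((1-ε)*(p-1)^2)
      ≤ C ^ (p-1)) :
    ∀ x : Esp d, x ≠ 0 →
      0 ≤ - diverg d
            (fun y => ‖y‖ ^ (-β) • gradient (fun z => C * ‖z‖ ^ ((γ-2-β)/(p-1))) y) x
          + (1-ε) * ‖x‖ ^ (-γ) * (C * ‖x‖ ^ ((γ-2-β)/(p-1))) ^ p :=
  power_supersolution_general d β γ p hp1 ε C hε1 hC hCbig
end
end
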